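/- arXiv:2409.19571 — 2 statements merged into one kernel-verified Lean document; each statement's English description precedes it below -/
import Mathlib

section
/- In the case a = 0, the function f(t,y) = f₁(t) y² + f₂(t) y + f₃(t), with f₁(t) = (γ(T) − γ(t))/(2γ(t)²), f₂(t) = −2r f₁(t), and f₃ solving f₃'(t) = r²/(2σ²) − (r f₂(t)γ(t) + f₁(t)γ(t)²)/σ² with f₃(T) = 0, solves the PDE f_t + (γ(t)²/(2σ²)) f_{yy} + (γ(t)(r−y)/σ²) f_y − (r−y)²/(2σ²) = 0 with terminal condition f(T,·) = 0. -/
open Set Filter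

/-!
Writing `γ = 1 / u` with `u t = σ₀⁻² + t σ⁻²` affine, `f₁ = (γ(T) u² − u) / 2` is a polynomial in `u`,
so it satisfies the Riccati-type equation `f₁' = (1 + 4 γ f₁) / (2σ²)`. Since `f₂ = −2r f₁`, the time
derivative of the ansatz is `f₁' ((y − r)² − r²) + f₃'`, and with that equation and the given `f₃'` the
PDE becomes a polynomial identity. The terminal condition holds because `f₁(T) = 0`.
-/

theorem hasDerivAt_quadratic (a b c y : ℝ) :
    HasDerivAt (fun z => a * z ^ 2 + b * z + c) (2 * a * y + b) y := by
  refine ((((hasDerivAt_pow 2 y).const_mul a).add ((hasDerivAt_id' y).const_mul b)).add_const c)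
    |>.congr_deriv ?_
  push_cast
  ring

theorem hasDerivAt_sub_inv_affine_div_sq {γ f : ℝ → ℝ} {p q c t : ℝ}
    (hγ : ∀ s, γ s = (p + s * q)⁻¹) (hf : ∀ s, f s = (c - γ s) / (2 * γ s ^ 2))
    (ht : p + t * q ≠ 0) :
    HasDerivAt f (q * (1 + 4 * γ t * f t) / 2) t := by
  have hu : HasDerivAt (fun s => p + s * q) q t := by
    simpa using ((hasDerivAt_id t).mul_const q).const_add p
  have hf_poly : f =ᶠ[nhds t] fun s => (c * (p + s * q) ^ 2 - (p + s * q)) / 2 := by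
    have hne : ∀ᶠ s in nhds t, p + s * q ≠ 0 := hu.continuousAt.eventually_ne ht
    filter_upwards [hne] with s hs
    rw [hf, hγ]
    field_simp
  refine (((hu.pow 2).const_mul c).sub hu |>.div_const 2).congr_of_eventuallyEq hf_poly
    |>.congr_deriv ?_
  rw [hf, hγ]
  field_simp
  ring

theorem stmt_9_general (r σ σ₀ T : ℝ) (hσ₀ : 0 < σ₀)
    (γ f₁ f₂ f₃ : ℝ → ℝ) (F : ℝ → ℝ → ℝ)
    (hγ : ∀ t, γ t = ((σ₀ ^ 2)⁻¹ + t * (σ ^ 2)⁻¹)⁻¹)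
    (hf₁ : ∀ t, f₁ t = (γ T - γ t) / (2 * (γ t) ^ 2))
    (hf₂ : ∀ t, f₂ t = -2 * r * f₁ t)
    (hf₃ : ∀ t ∈ Icc (0 : ℝ) T,
      HasDerivAt f₃ (r ^ 2 / (2 * σ ^ 2) - (r * f₂ t * γ t + f₁ t * (γ t) ^ 2) / σ ^ 2) t)
    (hf₃T : f₃ T = 0)
    (hF : ∀ t y, F t y = f₁ t * y ^ 2 + f₂ t * y + f₃ t) :
    ∀ t ∈ Icc (0 : ℝ) T, ∀ y : ℝ,
      -- the y-derivatives of F are 2f₁(t)y + f₂(t) and 2f₁(t):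
      HasDerivAt (fun z => F t z) (2 * f₁ t * y + f₂ t) y ∧
      HasDerivAt (fun z => 2 * f₁ t * z + f₂ t) (2 * f₁ t) y ∧
      -- the time derivative satisfies the PDE:
      HasDerivAt (fun s => F s y)
        (-(((γ t) ^ 2 / (2 * σ ^ 2)) * (2 * f₁ t)
          + (γ t * (r - y) / σ ^ 2) * (2 * f₁ t * y + f₂ t)
          - (r - y) ^ 2 / (2 * σ ^ 2))) t ∧
      -- terminal condition:
      F T y = 0 := by
  rintro t ⟨ht0, htT⟩ y
  have hf₁' := hasDerivAt_sub_inv_affine_div_sq hγ hf₁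
    (by positivity : (0 : ℝ) < (σ₀ ^ 2)⁻¹ + t * (σ ^ 2)⁻¹).ne'
  refine ⟨?_, ?_, ?_, ?_⟩
  · simpa only [hF] using hasDerivAt_quadratic (f₁ t) (f₂ t) (f₃ t) y
  · simpa using ((hasDerivAt_id y).const_mul (2 * f₁ t)).add_const (f₂ t)
  · have hF_time : (fun s => F s y) = fun s => f₁ s * (y ^ 2 - 2 * r * y) + f₃ s := by
      funext s
      rw [hF, hf₂]
      ring
    rw [hF_time]
    refine ((hf₁'.mul_const _).add (hf₃ t ⟨ht0, htT⟩)).congr_deriv ?_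
    rw [hf₂]
    ring
  · simp [hF, hf₂, hf₁, hf₃T]

/-- in the case a = 0, the quadratic-in-y ansatz
f(t,y) = f₁(t)y² + f₂(t)y + f₃(t) solves the PDE
f_t + (γ²/(2σ²)) f_{yy} + (γ(r−y)/σ²) f_y − (r−y)²/(2σ²) = 0, f(T,·) = 0,
where f_y(t,y) = 2f₁(t)y + f₂(t) and f_{yy}(t,y) = 2f₁(t). -/
theorem stmt_9 (r σ σ₀ T : ℝ) (hσ : 0 < σ) (hσ₀ : 0 < σ₀) (hT : 0 < T)
    (γ f₁ f₂ f₃ : ℝ → ℝ) (F : ℝ → ℝ → ℝ)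
    (hγ : ∀ t, γ t = ((σ₀ ^ 2)⁻¹ + t * (σ ^ 2)⁻¹)⁻¹)
    (hf₁ : ∀ t, f₁ t = (γ T - γ t) / (2 * (γ t) ^ 2))
    (hf₂ : ∀ t, f₂ t = -2 * r * f₁ t)
    (hf₃ : ∀ t ∈ Icc (0 : ℝ) T,
      HasDerivAt f₃ (r ^ 2 / (2 * σ ^ 2) - (r * f₂ t * γ t + f₁ t * (γ t) ^ 2) / σ ^ 2) t)
    (hf₃T : f₃ T = 0)
    (hF : ∀ t y, F t y = f₁ t * y ^ 2 + f₂ t * y + f₃ t) :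
    ∀ t ∈ Icc (0 : ℝ) T, ∀ y : ℝ,
      -- the y-derivatives of F are 2f₁(t)y + f₂(t) and 2f₁(t):
      HasDerivAt (fun z => F t z) (2 * f₁ t * y + f₂ t) y ∧
      HasDerivAt (fun z => 2 * f₁ t * z + f₂ t) (2 * f₁ t) y ∧
      -- the time derivative satisfies the PDE:
      HasDerivAt (fun s => F s y)
        (-(((γ t) ^ 2 / (2 * σ ^ 2)) * (2 * f₁ t)
          + (γ t * (r - y) / σ ^ 2) * (2 * f₁ t * y + f₂ t)
          - (r - y) ^ 2 / (2 * σ ^ 2))) t ∧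
      -- terminal condition:
      F T y = 0 :=
  stmt_9_general r σ σ₀ T hσ₀ γ f₁ f₂ f₃ F hγ hf₁ hf₂ hf₃ hf₃T hF
end

section
/- If Z ~ N(m, v) with v > 0 and m < r, then for g̃_y(z) = −(r − z + c)/σ² · 1_{r − z + c ≤ 0} − (r − z − c)/σ² · 1_{r − z − c ≥ 0} with constant c ≥ 0, one has E[g̃_y(Z)] < 0; if m > r then E[g̃_y(Z)] > 0; and if m = r then E[g̃_y(Z)] = 0. -/
/-!
Writing `g̃_y(z) = S_c(z - r) / σ²` with the soft-thresholding map `S_c`, it suffices to know the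
sign of `𝔼 f(X)` for `X ~ N(μ, v)` and `f` odd and monotone. If `μ > 0`, the reflection
`X ↦ 2μ - X` preserves the law of `X`, so oddness gives `2 𝔼 f(X) = 𝔼 [f(X) - f(X - 2μ)]`, whose
integrand is nonnegative by monotonicity and positive on a half-line where `f` is strictly
increasing. Negating `X` handles `μ < 0`, and for `μ = 0` oddness alone forces `𝔼 f(X) = 0`.
-/

open MeasureTheory ProbabilityTheory Set

/-- Soft thresholding at level `c`: `x ↦ sign x · max (|x| - c) 0` when `0 ≤ c`. -/
noncomputable def softThreshold (c x : ℝ) : ℝ := max (x - c) 0 + min (x + c) 0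

section softThreshold

variable (c : ℝ)

theorem continuous_softThreshold : Continuous (softThreshold c) := by
  unfold softThreshold
  fun_prop

theorem monotone_softThreshold : Monotone (softThreshold c) := fun x y hxy => by
  unfold softThreshold
  gcongr

theorem softThreshold_odd : Function.Odd (softThreshold c) := fun x => by
  unfold softThreshold
  rw [show -x - c = -(x + c) by ring, show -x + c = -(x - c) by ring, ← neg_zero,
    max_neg_neg, min_neg_neg, neg_zero]
  ring

variable {c}

theorem softThreshold_of_le {x : ℝ} (hc : 0 ≤ c) (hx : c ≤ x) : softThreshold c x = x - c := by
  rw [softThreshold, max_eq_left (by linarith), min_eq_right (by linarith), add_zero]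

theorem strictMonoOn_softThreshold (hc : 0 ≤ c) : StrictMonoOn (softThreshold c) (Ici c) :=
  fun x hx y hy hxy => by
    rw [softThreshold_of_le hc hx, softThreshold_of_le hc hy]
    linarith

theorem abs_softThreshold_le (hc : 0 ≤ c) (x : ℝ) : |softThreshold c x| ≤ |x| := by
  unfold softThreshold
  rcases le_total x (-c) with hx | hx
  · rw [max_eq_right (by linarith), min_eq_left (by linarith)]
    rw [abs_le, abs_of_nonpos (by linarith)]
    constructor <;> linarith
  rcases le_total x c with hx' | hx'
  · rw [max_eq_right (by linarith), min_eq_right (by linarith)]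
    simp
  · rw [max_eq_left (by linarith), min_eq_right (by linarith)]
    rw [abs_le, abs_of_nonneg (by linarith)]
    constructor <;> linarith

theorem integrable_softThreshold_gaussianReal (hc : 0 ≤ c) (μ : ℝ) (v : NNReal) :
    Integrable (softThreshold c) (gaussianReal μ v) :=
  (memLp_id_gaussianReal 1).integrable le_rfl |>.mono
    (continuous_softThreshold c).aestronglyMeasurable
    (ae_of_all _ (abs_softThreshold_le hc))

end softThreshold

section GaussianReal

variable {f : ℝ → ℝ} {μ : ℝ} {v : NNReal}

theorem integral_comp_sub_gaussianReal (y : ℝ) :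
    ∫ x, f (x - y) ∂gaussianReal μ v = ∫ x, f x ∂gaussianReal (μ - y) v := by
  rw [← gaussianReal_map_sub_const y,
    show (· - y) = ⇑(MeasurableEquiv.subRight y) from rfl, integral_map_equiv]
  rfl

theorem gaussianReal_Ioi_pos (hv : v ≠ 0) (t : ℝ) : 0 < gaussianReal μ v (Ioi t) := by
  refine pos_iff_ne_zero.mpr fun h => ?_
  simpa using gaussianReal_absolutelyContinuous' μ hv h

theorem gaussianReal_map_reflect :
    (gaussianReal μ v).map ⇑(MeasurableEquiv.subLeft (2 * μ)) = gaussianReal μ v := by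
  rw [show ⇑(MeasurableEquiv.subLeft (2 * μ)) = (2 * μ - ·) from rfl,
    gaussianReal_map_const_sub, two_mul, add_sub_cancel_right]

theorem integral_gaussianReal_comp_reflect :
    ∫ x, f (2 * μ - x) ∂gaussianReal μ v = ∫ x, f x ∂gaussianReal μ v := by
  conv_rhs => rw [← gaussianReal_map_reflect, integral_map_equiv]
  rfl

theorem integrable_gaussianReal_comp_reflect (hint : Integrable f (gaussianReal μ v)) :
    Integrable (fun x => f (2 * μ - x)) (gaussianReal μ v) := by
  rwa [← gaussianReal_map_reflect, integrable_map_equiv] at hint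

theorem integral_gaussianReal_neg_mean_of_odd (hf : Function.Odd f) :
    ∫ x, f x ∂gaussianReal (-μ) v = -∫ x, f x ∂gaussianReal μ v := by
  rw [← gaussianReal_map_neg, show (fun x : ℝ => -x) = MeasurableEquiv.neg ℝ from rfl,
    integral_map_equiv, ← integral_neg]
  exact integral_congr_ae (ae_of_all _ hf)

theorem integral_gaussianReal_zero_of_odd (hf : Function.Odd f) :
    ∫ x, f x ∂gaussianReal 0 v = 0 := by
  have h := integral_gaussianReal_neg_mean_of_odd (μ := 0) (v := v) hf
  rw [neg_zero] at h
  linarith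

theorem integral_gaussianReal_pos_of_odd_of_monotone {a : ℝ} (hf : Function.Odd f)
    (hmono : Monotone f) (hstrict : StrictMonoOn f (Ici a))
    (hint : Integrable f (gaussianReal μ v)) (hv : v ≠ 0) (hμ : 0 < μ) :
    0 < ∫ x, f x ∂gaussianReal μ v := by
  have hreflect : ∀ x, f (2 * μ - x) = -f (x - 2 * μ) := fun x => by
    rw [← hf, neg_sub]
  have hint' : Integrable (fun x => f (x - 2 * μ)) (gaussianReal μ v) := by
    simpa [hreflect] using (integrable_gaussianReal_comp_reflect hint).neg
  have hsum : ∫ x, f x ∂gaussianReal μ v + ∫ x, f x ∂gaussianReal μ v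
      = ∫ x, (f x - f (x - 2 * μ)) ∂gaussianReal μ v := by
    conv_lhs => arg 2; rw [← integral_gaussianReal_comp_reflect]
    simp_rw [hreflect, integral_neg, integral_sub hint hint', sub_eq_add_neg]
  have hpos : 0 < ∫ x, (f x - f (x - 2 * μ)) ∂gaussianReal μ v := by
    rw [integral_pos_iff_support_of_nonneg
      (fun x => sub_nonneg.mpr (hmono (by linarith))) (hint.sub hint')]
    refine (gaussianReal_Ioi_pos hv (a + 2 * μ)).trans_le (measure_mono fun x hx => ?_)
    have hx : a + 2 * μ < x := hx
    exact (sub_pos.mpr (hstrict (mem_Ici.mpr (by linarith)) (mem_Ici.mpr (by linarith))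
      (by linarith))).ne'
  linarith

end GaussianReal

/-- for Z ~ N(m,v) with v > 0, the expectation of
g̃_y(z) = −(r−z+c)/σ²·1_{r−z+c ≤ 0} − (r−z−c)/σ²·1_{r−z−c ≥ 0}
is negative if m < r, positive if m > r, and zero if m = r. -/
theorem stmt_13 (m r σ c : ℝ) (v : NNReal) (hv : 0 < v) (hσ : 0 < σ) (hc : 0 ≤ c)
    (gy : ℝ → ℝ)
    (hgy : ∀ z, gy z = -((if r - z + c ≤ 0 then (r - z + c) / σ ^ 2 else 0)
        + (if 0 ≤ r - z - c then (r - z - c) / σ ^ 2 else 0))) :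
    (m < r → (∫ z, gy z ∂(gaussianReal m v)) < 0) ∧
    (r < m → 0 < ∫ z, gy z ∂(gaussianReal m v)) ∧
    (m = r → (∫ z, gy z ∂(gaussianReal m v)) = 0) := by
  have hgy_eq : gy = fun z => softThreshold c (z - r) / σ ^ 2 := by
    funext z
    rw [hgy, softThreshold]
    split_ifs <;> simp only [max_def, min_def] <;> split_ifs <;> field_simp <;> linarith
  have hσ2 : 0 < σ ^ 2 := by positivity
  have hpos : ∀ {μ}, 0 < μ → 0 < ∫ x, softThreshold c x ∂gaussianReal μ v := fun hμ =>
    integral_gaussianReal_pos_of_odd_of_monotone (softThreshold_odd c) (monotone_softThreshold c)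
      (strictMonoOn_softThreshold hc) (integrable_softThreshold_gaussianReal hc _ _) hv.ne' hμ
  rw [hgy_eq, integral_div, integral_comp_sub_gaussianReal]
  refine ⟨fun hm => ?_, fun hm => div_pos (hpos (by linarith)) hσ2, fun hm => ?_⟩
  · rw [show m - r = -(r - m) by ring,
      integral_gaussianReal_neg_mean_of_odd (softThreshold_odd c)]
    exact div_neg_of_neg_of_pos (neg_neg_of_pos (hpos (by linarith))) hσ2
  · rw [hm, sub_self, integral_gaussianReal_zero_of_odd (softThreshold_odd c), zero_div]
end
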